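/- arXiv:0903.4965 — 3 statements merged into one kernel-verified Lean document; each statement's English description precedes it below -/
import Mathlib

section
/- Let p be a prime, r ≥ 1, and a_1 ≥ a_2 ≥ ⋯ ≥ a_r ≥ 1 integers; let s be the number of indices j with a_j = a_1. Then E(p^{a_1}, p^{a_2}, …, p^{a_r}) = 0 if and only if s = 1, or p = 2 and s is odd. -/
/-- The von Sterneck function `Φ(k,n) = μ(n/gcd(k,n)) * φ(n) / φ(n/gcd(k,n))`. -/
noncomputable def vonSterneck (k n : ℕ) : ℚ :=
  (ArithmeticFunction.moebius (n / Nat.gcd k n) : ℚ) * (Nat.totient n : ℚ) /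
    (Nat.totient (n / Nat.gcd k n) : ℚ)

/-- The orbicyclic function `E(m_1,…,m_r)`. -/
noncomputable def orbE {r : ℕ} (m : Fin r → ℕ) : ℚ :=
  (∑ k ∈ Finset.Icc 1 (Finset.univ.lcm m), ∏ j, vonSterneck k (m j)) /
    ((Finset.univ.lcm m : ℕ) : ℚ)

/-- The polynomial `h_s(x) = ((x-1)^(s-1) + (-1)^s)/x`. -/
noncomputable def hpoly (s : ℕ) (x : ℚ) : ℚ := ((x - 1) ^ (s - 1) + (-1) ^ s) / x

/-!
Write `A = a_1`. Only the multiples `k = t p^(A-1)`, `1 ≤ t ≤ p`, contribute to `E`: for other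
`k` the factor `Φ(k, p^A)` vanishes. For such `k` every factor with `a_j < A` equals `φ(p^(a_j))`,
while each of the `s` factors with `a_j = A` equals `φ(p^A) = p^(A-1)(p-1)` when `t = p` and
`-p^(A-1)` otherwise. Summing, `E` is a nonzero multiple of `h_s(p) = ((p-1)^(s-1) + (-1)^s)/p`,
which vanishes exactly when `s = 1`, or `p = 2` and `s` is odd.
-/

open Finset

lemma sum_Icc_mul_eq_of_eq_zero_of_not_dvd {M : Type*} [AddCommMonoid M] {d : ℕ} (hd : 0 < d)
    (n : ℕ) (f : ℕ → M) (hf : ∀ k, ¬ d ∣ k → f k = 0) :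
    ∑ k ∈ Icc 1 (n * d), f k = ∑ t ∈ Icc 1 n, f (t * d) := by
  rw [← sum_image fun x _ y _ h => Nat.eq_of_mul_eq_mul_right hd h]
  refine (sum_subset (fun k hk => ?_) fun k hk hk' => hf k ?_).symm
  · obtain ⟨t, ht, rfl⟩ := mem_image.1 hk
    rw [mem_Icc] at ht ⊢
    exact ⟨Nat.mul_pos ht.1 hd, Nat.mul_le_mul_right d ht.2⟩
  · rintro ⟨t, rfl⟩
    rw [mem_Icc] at hk
    refine hk' (mem_image.2 ⟨t, mem_Icc.2 ⟨?_, ?_⟩, mul_comm t d⟩)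
    · exact Nat.pos_of_mul_pos_left hk.1
    · exact Nat.le_of_mul_le_mul_right (mul_comm d t ▸ hk.2) hd

lemma vonSterneck_of_dvd {k n : ℕ} (h : n ∣ k) : vonSterneck k n = Nat.totient n := by
  rcases n.eq_zero_or_pos with rfl | hn
  · simp [vonSterneck]
  · simp [vonSterneck, Nat.gcd_eq_right h, Nat.div_self hn]

section PrimePow

variable {p : ℕ} (hp : p.Prime)
include hp

lemma vonSterneck_mul_prime_pow_succ {t : ℕ} (ht : ¬ p ∣ t) (B : ℕ) :
    vonSterneck (t * p ^ B) (p ^ (B + 1)) = -(p : ℚ) ^ B := by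
  have hgcd : Nat.gcd (t * p ^ B) (p ^ (B + 1)) = p ^ B := by
    rw [pow_succ', Nat.gcd_mul_right,
      (Nat.coprime_comm.1 (hp.coprime_iff_not_dvd.2 ht)).gcd_eq_one, one_mul]
  have hp1 : (p : ℚ) - 1 ≠ 0 := sub_ne_zero.2 (by exact_mod_cast hp.one_lt.ne')
  rw [vonSterneck, hgcd, pow_succ', Nat.mul_div_cancel _ (pow_pos hp.pos B),
    ArithmeticFunction.moebius_apply_prime hp, ← pow_succ', Nat.totient_prime_pow_succ hp,
    Nat.totient_prime hp]
  push_cast [Nat.cast_sub hp.one_le]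
  field_simp

lemma vonSterneck_prime_pow_succ_eq_zero {k B : ℕ} (hk : ¬ p ^ B ∣ k) :
    vonSterneck k (p ^ (B + 1)) = 0 := by
  obtain ⟨i, hi, hgcd⟩ := (Nat.dvd_prime_pow hp).1 (Nat.gcd_dvd_right k (p ^ (B + 1)))
  have hiB : i < B := by
    by_contra! h
    exact hk ((pow_dvd_pow p h).trans (hgcd ▸ Nat.gcd_dvd_left k _))
  have hsq : ¬ Squarefree (p ^ (B + 1 - i)) := by
    rw [Nat.squarefree_pow_iff hp.ne_one (by omega)]
    omega
  simp [vonSterneck, hgcd, Nat.pow_div hi hp.pos,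
    ArithmeticFunction.moebius_eq_zero_of_not_squarefree hsq]

end PrimePow

lemma prod_vonSterneck_prime_pow_of_dvd {ι : Type*} [Fintype ι] {p B k : ℕ} {a : ι → ℕ}
    (hmax : ∀ j, a j ≤ B + 1) (hk : p ^ B ∣ k) :
    ∏ j, vonSterneck k (p ^ a j) =
      vonSterneck k (p ^ (B + 1)) ^ #{j | a j = B + 1} *
        ∏ j with a j ≠ B + 1, (Nat.totient (p ^ a j) : ℚ) := by
  rw [← prod_filter_mul_prod_filter_not univ (fun j => a j = B + 1)]
  congr 1
  · exact prod_eq_pow_card fun j hj => by rw [(mem_filter.1 hj).2]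
  · refine prod_congr rfl fun j hj => vonSterneck_of_dvd ((pow_dvd_pow p ?_).trans hk)
    have := hmax j
    have := (mem_filter.1 hj).2
    omega

lemma hpoly_eq_zero_iff {x : ℚ} (hx : 2 ≤ x) (s : ℕ) :
    hpoly s x = 0 ↔ s = 1 ∨ (x = 2 ∧ Odd s) := by
  rw [hpoly, div_eq_zero_iff, or_iff_left (by positivity)]
  rcases Nat.even_or_odd s with hs | hs
  · have : 1 ≤ (x - 1) ^ (s - 1) := one_le_pow₀ (by linarith)
    rw [hs.neg_one_pow]
    refine iff_of_false (by linarith) ?_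
    rintro (rfl | ⟨-, hodd⟩)
    · exact Nat.not_even_one hs
    · exact Nat.not_odd_iff_even.2 hs hodd
  · rw [hs.neg_one_pow]
    by_cases h1 : s = 1
    · simp [h1]
    · rw [← sub_eq_add_neg, sub_eq_zero, pow_eq_one_iff_of_nonneg (by linarith)
        (by obtain ⟨m, rfl⟩ := hs; omega)]
      simp only [h1, hs, false_or, and_true]
      constructor <;> intro <;> linarith

theorem orbE_prime_pow {p r B : ℕ} (hp : p.Prime) {a : Fin r → ℕ} (j₀ : Fin r)
    (hj₀ : a j₀ = B + 1) (hmax : ∀ j, a j ≤ B + 1) :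
    orbE (fun j => p ^ a j) =
      (∏ j with a j ≠ B + 1, (Nat.totient (p ^ a j) : ℚ)) *
        ((p : ℚ) ^ B) ^ (#{j | a j = B + 1} - 1) * ((p : ℚ) - 1) *
          hpoly #{j | a j = B + 1} p := by
  set s := #{j | a j = B + 1}
  set C := ∏ j with a j ≠ B + 1, (Nat.totient (p ^ a j) : ℚ)
  obtain ⟨s', hs'⟩ : ∃ s', s = s' + 1 :=
    Nat.exists_eq_add_one.2 (card_pos.2 ⟨j₀, mem_filter.2 ⟨mem_univ _, hj₀⟩⟩)
  have hlcm : univ.lcm (fun j => p ^ a j) = p * p ^ B := by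
    rw [← pow_succ']
    exact Nat.dvd_antisymm (Finset.lcm_dvd fun j _ => pow_dvd_pow p (hmax j))
      (hj₀ ▸ Finset.dvd_lcm (mem_univ j₀))
  have hnotdvd : ∀ k, ¬ p ^ B ∣ k → ∏ j, vonSterneck k (p ^ a j) = 0 := fun k hk =>
    prod_eq_zero (mem_univ j₀) (hj₀ ▸ vonSterneck_prime_pow_succ_eq_zero hp hk)
  have hmid : ∀ t ∈ Icc 1 (p - 1),
      ∏ j, vonSterneck (t * p ^ B) (p ^ a j) = (-(p : ℚ) ^ B) ^ s * C := fun t ht => by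
    have ht' := mem_Icc.1 ht
    rw [prod_vonSterneck_prime_pow_of_dvd hmax (dvd_mul_left _ _),
      vonSterneck_mul_prime_pow_succ hp (Nat.not_dvd_of_pos_of_lt ht'.1 (by omega))]
  have htop : ∏ j, vonSterneck (p * p ^ B) (p ^ a j) = ((p : ℚ) ^ B * (p - 1)) ^ s * C := by
    rw [prod_vonSterneck_prime_pow_of_dvd hmax (dvd_mul_left _ _), ← pow_succ',
      vonSterneck_of_dvd dvd_rfl, Nat.totient_prime_pow_succ hp]
    push_cast [Nat.cast_sub hp.one_le]
    rfl
  have hsplit := sum_Icc_succ_top (Nat.le_add_left 1 (p - 1))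
    fun t => ∏ j, vonSterneck (t * p ^ B) (p ^ a j)
  rw [Nat.sub_add_cancel hp.one_le] at hsplit
  rw [orbE, hlcm, sum_Icc_mul_eq_of_eq_zero_of_not_dvd (pow_pos hp.pos B) p _ hnotdvd, hsplit,
    sum_congr rfl hmid, htop, sum_const, Nat.card_Icc, nsmul_eq_mul, hpoly, hs']
  have hp0 : (p : ℚ) ≠ 0 := by exact_mod_cast hp.ne_zero
  push_cast [Nat.cast_sub hp.one_le]
  rw [mul_pow, neg_pow]
  field_simp
  ring

theorem orbE_prime_pow_eq_zero_iff (p r : ℕ) (hp : p.Prime) (hr : 1 ≤ r) (a : Fin r → ℕ)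
    (ha : ∀ j, 1 ≤ a j) (hmono : Antitone a) :
    orbE (fun j => p ^ a j) = 0 ↔
      (Finset.univ.filter fun j => a j = a ⟨0, hr⟩).card = 1 ∨
        (p = 2 ∧ Odd (Finset.univ.filter fun j => a j = a ⟨0, hr⟩).card) := by
  obtain ⟨B, hB⟩ := Nat.exists_eq_add_one.2 (ha ⟨0, hr⟩)
  have hmax : ∀ j, a j ≤ B + 1 := fun j => hB ▸ hmono (Fin.mk_le_of_le_val (Nat.zero_le _))
  have hC : (∏ j with a j ≠ B + 1, (Nat.totient (p ^ a j) : ℚ)) ≠ 0 :=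
    prod_ne_zero_iff.2 fun j _ => by exact_mod_cast (Nat.totient_pos.2 (pow_pos hp.pos _)).ne'
  have hp0 : (p : ℚ) ≠ 0 := by exact_mod_cast hp.ne_zero
  have hp1 : (p : ℚ) - 1 ≠ 0 := sub_ne_zero.2 (by exact_mod_cast hp.one_lt.ne')
  rw [hB, orbE_prime_pow hp _ hB hmax, mul_eq_zero,
    or_iff_right (mul_ne_zero (mul_ne_zero hC (pow_ne_zero _ (pow_ne_zero _ hp0))) hp1),
    hpoly_eq_zero_iff (by exact_mod_cast hp.two_le)]
  norm_cast
end

section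
/- Let (m_1, m_2, …, m_r) be a tuple of positive integers with r ≥ 1, and suppose m_1 = m_1'·m_1'' with gcd(m_1', m_1'') = 1. Then E(m_1, m_2, …, m_r) = E(m_1', m_1'', m_2, …, m_r). -/
/-! Splitting `m₁` into coprime factors changes neither the range of summation, since
`lcm m₁' m₁'' = m₁' * m₁''`, nor the summands, since `Φ(k, ·)` is multiplicative. -/

lemma vonSterneck_mul_of_coprime (k : ℕ) {a b : ℕ} (h : a.Coprime b) :
    vonSterneck k (a * b) = vonSterneck k a * vonSterneck k b := by
  have hda : k.gcd a ∣ a := Nat.gcd_dvd_right k a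
  have hdb : k.gcd b ∣ b := Nat.gcd_dvd_right k b
  have hquot : a * b / k.gcd (a * b) = a / k.gcd a * (b / k.gcd b) := by
    rw [Nat.Coprime.gcd_mul k h, Nat.div_mul_div_comm hda hdb]
  have hcop : (a / k.gcd a).Coprime (b / k.gcd b) :=
    (h.coprime_dvd_left (Nat.div_dvd_of_dvd hda)).coprime_dvd_right (Nat.div_dvd_of_dvd hdb)
  simp only [vonSterneck, hquot, Nat.totient_mul h, Nat.totient_mul hcop,
    ArithmeticFunction.isMultiplicative_moebius.map_mul_of_coprime hcop]
  push_cast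
  ring

lemma Fin.lcm_univ_cons {n : ℕ} (a : ℕ) (f : Fin n → ℕ) :
    Finset.univ.lcm (Fin.cons a f : Fin (n + 1) → ℕ) = a.lcm (Finset.univ.lcm f) := by
  rw [Fin.univ_succ, Finset.cons_eq_insert, Finset.lcm_insert, Finset.map_eq_image,
    Finset.lcm_image]
  rfl

lemma orbE_cons_mul_of_coprime {n : ℕ} {a b : ℕ} (h : a.Coprime b) (f : Fin n → ℕ) :
    orbE (Fin.cons (a * b) f) = orbE (Fin.cons a (Fin.cons b f)) := by
  have hlcm : Finset.univ.lcm (Fin.cons a (Fin.cons b f) : Fin (n + 2) → ℕ) =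
      Finset.univ.lcm (Fin.cons (a * b) f : Fin (n + 1) → ℕ) := by
    rw [Fin.lcm_univ_cons, Fin.lcm_univ_cons, Fin.lcm_univ_cons, ← Nat.lcm_assoc,
      h.lcm_eq_mul]
  simp only [orbE, hlcm, Fin.prod_univ_succ, Fin.cons_zero, Fin.cons_succ,
    vonSterneck_mul_of_coprime _ h, mul_assoc]

theorem orbE_split_coprime_general {r : ℕ} (m : Fin (r + 1) → ℕ) (m₁' m₁'' : ℕ)
    (hsplit : m 0 = m₁' * m₁'') (hcop : Nat.Coprime m₁' m₁'') :
    orbE m = orbE (Fin.cons m₁' (Fin.cons m₁'' (Fin.tail m))) := by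
  rw [← orbE_cons_mul_of_coprime hcop, ← hsplit, Fin.cons_self_tail]

theorem orbE_split_coprime {r : ℕ} (m : Fin (r + 1) → ℕ) (hm : ∀ j, 0 < m j)
    (m₁' m₁'' : ℕ) (h₁' : 0 < m₁') (h₁'' : 0 < m₁'')
    (hsplit : m 0 = m₁' * m₁'') (hcop : Nat.Coprime m₁' m₁'') :
    orbE m = orbE (Fin.cons m₁' (Fin.cons m₁'' (Fin.tail m))) :=
  orbE_split_coprime_general m m₁' m₁'' hsplit hcop
end

section
/- Let M be a positive integer and m_1, m_2, …, m_r divisors of M (r ≥ 0); set d_j = M/m_j for j = 1,…,r. Then the number of tuples (x_1,…,x_r) of integers with 1 ≤ x_j ≤ M, gcd(x_j, M) = d_j for each j, and x_1 + x_2 + ⋯ + x_r ≡ 0 (mod M), is equal to E(m_1, m_2, …, m_r); in particular this number does not depend on the choice of the common multiple M. -/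
/-!
Detect the congruence with a primitive `M`-th root of unity `ζ`: `M` times the number of solutions
is `∑_{k=1}^{M} ∏_j ∑_{gcd(x, M) = M/m_j} ζ^{kx}`, and each inner sum is the Ramanujan sum
`c_{m_j}(k)`. Hölder's formula `c_n(k) = Φ(k, n)` follows by Möbius sieving the coprimality
condition, which gives `c_n(k) = ∑_{d ∣ (n, k)} d μ(n/d)`, and comparing this multiplicative
function of `n` with `Φ(k, ·)` on prime powers. Finally `Φ(·, m_j)` is `lcm(m)`-periodic, so the
sum over `1 ≤ k ≤ M` is `M / lcm(m)` copies of the sum defining `E`.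
-/

open ArithmeticFunction Finset
open scoped ArithmeticFunction.Moebius

theorem ArithmeticFunction.mul_moebius_apply_prime_pow_succ {R : Type*} [CommRing R]
    (f : ArithmeticFunction R) {p : ℕ} (hp : p.Prime) (i : ℕ) :
    (f * μ) (p ^ (i + 1)) = f (p ^ (i + 1)) - f (p ^ i) := by
  rw [mul_apply, Nat.sum_divisorsAntidiagonal (fun x y => f x * (μ : ArithmeticFunction R) y),
    Nat.sum_divisors_prime_pow hp, sum_range_succ, sum_range_succ]
  have hvanish :
      ∀ j ∈ range i, f (p ^ j) * (μ : ArithmeticFunction R) (p ^ (i + 1) / p ^ j) = 0 := by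
    intro j hj
    rw [mem_range] at hj
    rw [Nat.pow_div (by omega) hp.pos, intCoe_apply,
      moebius_apply_prime_pow hp (by omega), if_neg (by omega)]
    simp
  rw [sum_eq_zero hvanish, Nat.pow_div (by omega) hp.pos, Nat.pow_div le_rfl hp.pos,
    Nat.add_sub_cancel_left, Nat.sub_self, intCoe_apply, intCoe_apply, pow_one, pow_zero,
    moebius_apply_prime hp, moebius_apply_one]
  simp only [Int.cast_neg, Int.cast_one]
  ring

noncomputable def idOnDivisors (k : ℕ) : ArithmeticFunction ℚ :=
  ⟨fun n => if n ∣ k ∧ n ≠ 0 then (n : ℚ) else 0, by simp⟩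

theorem idOnDivisors_apply (k n : ℕ) :
    idOnDivisors k n = if n ∣ k ∧ n ≠ 0 then (n : ℚ) else 0 := rfl

theorem isMultiplicative_idOnDivisors (k : ℕ) : (idOnDivisors k).IsMultiplicative := by
  refine ⟨by simp [idOnDivisors_apply], fun {a b} hab => ?_⟩
  have hdvd : a * b ∣ k ↔ a ∣ k ∧ b ∣ k :=
    ⟨fun h => ⟨dvd_of_mul_right_dvd h, dvd_of_mul_left_dvd h⟩,
      fun h => hab.mul_dvd_of_dvd_of_dvd h.1 h.2⟩
  simp only [idOnDivisors_apply, ite_zero_mul_ite_zero, hdvd, mul_ne_zero_iff, Nat.cast_mul,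
    and_and_and_comm]

noncomputable def vonSterneckArith (k : ℕ) : ArithmeticFunction ℚ :=
  ⟨fun n => vonSterneck k n, by simp [vonSterneck]⟩

theorem vonSterneckArith_apply (k n : ℕ) : vonSterneckArith k n = vonSterneck k n := rfl

theorem isMultiplicative_vonSterneckArith (k : ℕ) : (vonSterneckArith k).IsMultiplicative := by
  refine ⟨by simp [vonSterneckArith_apply, vonSterneck], fun {a b} hab => ?_⟩
  simp only [vonSterneckArith_apply, vonSterneck]
  have hga : Nat.gcd k a ∣ a := Nat.gcd_dvd_right k a
  have hgb : Nat.gcd k b ∣ b := Nat.gcd_dvd_right k b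
  have hquot : a * b / Nat.gcd k (a * b) = (a / Nat.gcd k a) * (b / Nat.gcd k b) := by
    rw [hab.gcd_mul k, Nat.div_mul_div_comm hga hgb]
  have hcop : (a / Nat.gcd k a).Coprime (b / Nat.gcd k b) :=
    (hab.coprime_dvd_left (Nat.div_dvd_of_dvd hga)).coprime_dvd_right (Nat.div_dvd_of_dvd hgb)
  rw [hquot, isMultiplicative_moebius.map_mul_of_coprime hcop, Nat.totient_mul hab,
    Nat.totient_mul hcop]
  push_cast
  ring

theorem Nat.gcd_prime_pow_eq {p : ℕ} (hp : p.Prime) {k : ℕ} (hk : k ≠ 0) (i : ℕ) :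
    Nat.gcd k (p ^ i) = p ^ min (k.factorization p) i := by
  obtain ⟨j, -, hj⟩ := (Nat.dvd_prime_pow hp).mp (Nat.gcd_dvd_right k (p ^ i))
  have hfac := congrArg (· p) (Nat.factorization_gcd hk (pow_ne_zero i hp.ne_zero))
  simp only [hj, hp.factorization_pow, Finsupp.inf_apply, Finsupp.single_eq_same] at hfac
  rw [hj, hfac]

theorem idOnDivisors_apply_prime_pow {p : ℕ} (hp : p.Prime) {k : ℕ} (hk : k ≠ 0) (i : ℕ) :
    idOnDivisors k (p ^ i) = if i ≤ k.factorization p then (p : ℚ) ^ i else 0 := by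
  simp [idOnDivisors_apply, hp.pow_dvd_iff_le_factorization hk, hp.ne_zero]

theorem vonSterneck_prime_pow_succ {p : ℕ} (hp : p.Prime) {k : ℕ} (hk : k ≠ 0) (i : ℕ) :
    vonSterneck k (p ^ (i + 1)) =
      (if i + 1 ≤ k.factorization p then (p : ℚ) ^ (i + 1) else 0) -
        if i ≤ k.factorization p then (p : ℚ) ^ i else 0 := by
  have hp1 : (p : ℚ) - 1 ≠ 0 := sub_ne_zero.mpr (by exact_mod_cast hp.ne_one)
  rw [vonSterneck, Nat.gcd_prime_pow_eq hp hk, Nat.pow_div (min_le_right _ _) hp.pos,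
    Nat.totient_prime_pow_succ hp]
  rcases lt_trichotomy (k.factorization p) i with hlt | heq | hgt
  · rw [min_eq_left (by omega), moebius_apply_prime_pow hp (by omega), if_neg (by omega),
      if_neg (by omega), if_neg (by omega)]
    simp
  · rw [heq, min_eq_left (by omega), Nat.add_sub_cancel_left, pow_one, moebius_apply_prime hp,
      Nat.totient_prime hp, if_neg (by omega), if_pos le_rfl]
    push_cast [hp.one_le]
    field_simp
    ring
  · rw [min_eq_right (by omega), Nat.sub_self, pow_zero, moebius_apply_one, Nat.totient_one,
      if_pos (by omega), if_pos (by omega)]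
    push_cast [hp.one_le]
    ring

theorem idOnDivisors_mul_moebius {k : ℕ} (hk : k ≠ 0) :
    idOnDivisors k * μ = vonSterneckArith k := by
  refine (IsMultiplicative.eq_iff_eq_on_prime_powers _
    ((isMultiplicative_idOnDivisors k).mul isMultiplicative_moebius.intCast) _
    (isMultiplicative_vonSterneckArith k)).mpr fun p i hp => ?_
  cases i with
  | zero => simp [vonSterneckArith_apply, vonSterneck, idOnDivisors_apply]
  | succ i =>
    rw [mul_moebius_apply_prime_pow_succ _ hp, idOnDivisors_apply_prime_pow hp hk,
      idOnDivisors_apply_prime_pow hp hk, vonSterneckArith_apply, vonSterneck_prime_pow_succ hp hk]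

theorem vonSterneck_eq_sum_divisors {k : ℕ} (hk : k ≠ 0) (n : ℕ) :
    vonSterneck k n = ∑ d ∈ n.divisors, (if d ∣ k then (d : ℚ) else 0) * μ (n / d) := by
  rw [← vonSterneckArith_apply, ← idOnDivisors_mul_moebius hk, mul_apply,
    Nat.sum_divisorsAntidiagonal (fun x y => idOnDivisors k x * (μ : ArithmeticFunction ℚ) y)]
  refine sum_congr rfl fun d hd => ?_
  simp [idOnDivisors_apply, Nat.ne_of_gt (Nat.pos_of_mem_divisors hd)]

theorem Finset.sum_Icc_one_eq_sum_range {M : Type*} [AddCommMonoid M] (f : ℕ → M) (n : ℕ) :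
    ∑ k ∈ Icc 1 n, f k = ∑ k ∈ range n, f (k + 1) := by
  rw [range_eq_Ico, sum_Ico_add', zero_add, Ico_add_one_right_eq_Icc]

theorem IsPrimitiveRoot.sum_Icc_pow_mul {R : Type*} [CommRing R] [IsDomain R] {z : R} {n : ℕ}
    (hz : IsPrimitiveRoot z n) (s : ℕ) :
    ∑ t ∈ Icc 1 n, z ^ (s * t) = if n ∣ s then (n : R) else 0 := by
  simp_rw [pow_mul]
  split_ifs with hs
  · simp [(hz.pow_eq_one_iff_dvd s).mpr hs]
  · have hw : z ^ s ≠ 1 := mt (hz.pow_eq_one_iff_dvd s).mp hs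
    have hgeom : ∑ t ∈ range n, (z ^ s) ^ t = 0 := by
      have hwn : (z ^ s) ^ n = 1 := by rw [← pow_mul, mul_comm, pow_mul, hz.pow_eq_one, one_pow]
      have h := mul_geom_sum (z ^ s) n
      rw [hwn, sub_self] at h
      exact (mul_eq_zero.mp h).resolve_left (sub_ne_zero.mpr hw)
    simp_rw [sum_Icc_one_eq_sum_range, pow_succ, ← sum_mul, hgeom, zero_mul]

theorem Finset.sum_Icc_filter_dvd {M : Type*} [AddCommMonoid M] (f : ℕ → M) {d n : ℕ}
    (hd : d ∣ n) : ∑ v ∈ Icc 1 n with d ∣ v, f v = ∑ t ∈ Icc 1 (n / d), f (d * t) := by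
  rcases Nat.eq_zero_or_pos d with rfl | hd0
  · obtain rfl := zero_dvd_iff.mp hd
    simp
  symm
  refine sum_nbij' (d * ·) (· / d) (fun t ht => ?_) (fun v hv => ?_)
    (fun t _ => Nat.mul_div_cancel_left t hd0)
    (fun v hv => Nat.mul_div_cancel' (mem_filter.mp hv).2) (fun _ _ => rfl)
  · simp only [mem_Icc] at ht
    simp only [mem_filter, mem_Icc, dvd_mul_right, and_true]
    refine ⟨Nat.one_le_iff_ne_zero.mpr (mul_ne_zero hd0.ne' (by omega)), ?_⟩
    calc d * t ≤ d * (n / d) := Nat.mul_le_mul_left d ht.2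
      _ = n := Nat.mul_div_cancel' hd
  · simp only [mem_filter, mem_Icc] at hv
    obtain ⟨⟨hv1, hvn⟩, hdv⟩ := hv
    exact mem_Icc.mpr ⟨(Nat.one_le_div_iff hd0).mpr (Nat.le_of_dvd hv1 hdv),
      Nat.div_le_div_right hvn⟩

theorem Nat.gcd_mul_eq_self_iff {d m v : ℕ} (hd : 0 < d) :
    Nat.gcd v (d * m) = d ↔ d ∣ v ∧ (v / d).Coprime m := by
  constructor
  · intro h
    have hdv : d ∣ v := h ▸ Nat.gcd_dvd_left v (d * m)
    obtain ⟨w, rfl⟩ := hdv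
    rw [Nat.gcd_mul_left] at h
    rw [Nat.mul_div_cancel_left w hd]
    exact ⟨dvd_mul_right d w, Nat.eq_of_mul_eq_mul_left hd (h.trans (mul_one d).symm)⟩
  · rintro ⟨⟨w, rfl⟩, hw⟩
    rw [Nat.mul_div_cancel_left w hd] at hw
    rw [Nat.gcd_mul_left, hw, mul_one]

theorem Finset.sum_Icc_filter_gcd_eq {M : Type*} [AddCommMonoid M] (f : ℕ → M) {d m : ℕ}
    (hd : 0 < d) :
    ∑ v ∈ Icc 1 (d * m) with Nat.gcd v (d * m) = d, f v =
      ∑ t ∈ Icc 1 m with t.Coprime m, f (d * t) := by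
  simp_rw [Nat.gcd_mul_eq_self_iff hd, ← filter_filter,
    sum_filter (p := fun v => (v / d).Coprime m), sum_Icc_filter_dvd _ (dvd_mul_right d m),
    Nat.mul_div_cancel_left _ hd, ← sum_filter]

theorem ArithmeticFunction.sum_divisors_moebius {R : Type*} [Ring R] (n : ℕ) :
    ∑ d ∈ n.divisors, (μ d : R) = if n = 1 then 1 else 0 := by
  have h := congrArg (· n) (coe_moebius_mul_coe_zeta (R := R))
  simpa only [coe_mul_zeta_apply, intCoe_apply, one_apply] using h

theorem Finset.sum_filter_coprime_eq_sum_moebius {R : Type*} [CommRing R] (s : Finset ℕ) (f : ℕ → R)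
    {n : ℕ} (hn : n ≠ 0) :
    ∑ t ∈ s with t.Coprime n, f t = ∑ d ∈ n.divisors, (μ d : R) * ∑ t ∈ s with d ∣ t, f t := by
  have hdiv : ∀ t, {d ∈ n.divisors | d ∣ t} = (Nat.gcd t n).divisors := fun t => by
    ext d
    have := Nat.gcd_ne_zero_right (m := t) hn
    simp only [mem_filter, Nat.mem_divisors, Nat.dvd_gcd_iff]
    tauto
  calc ∑ t ∈ s with t.Coprime n, f t
      = ∑ t ∈ s, (∑ d ∈ (Nat.gcd t n).divisors, (μ d : R)) * f t := by
        rw [sum_filter]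
        refine sum_congr rfl fun t _ => ?_
        simp only [ArithmeticFunction.sum_divisors_moebius, Nat.coprime_iff_gcd_eq_one, ite_mul,
          one_mul, zero_mul]
    _ = ∑ t ∈ s, ∑ d ∈ n.divisors, if d ∣ t then (μ d : R) * f t else 0 := by
        simp_rw [← hdiv, sum_filter, sum_mul, ite_mul, zero_mul]
    _ = ∑ d ∈ n.divisors, (μ d : R) * ∑ t ∈ s with d ∣ t, f t := by
        rw [sum_comm]
        simp_rw [sum_filter, mul_sum, mul_ite, mul_zero]

theorem IsPrimitiveRoot.sum_coprime_pow_mul_eq_vonSterneck {K : Type*} [Field K] [CharZero K]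
    {z : K} {n k : ℕ} (hz : IsPrimitiveRoot z n) (hk : k ≠ 0) :
    ∑ t ∈ Icc 1 n with t.Coprime n, z ^ (k * t) = vonSterneck k n := by
  rcases n.eq_zero_or_pos with rfl | hn
  · simp [vonSterneck]
  rw [sum_filter_coprime_eq_sum_moebius _ _ hn.ne', vonSterneck_eq_sum_divisors hk,
    ← Nat.sum_div_divisors n, Rat.cast_sum]
  refine sum_congr rfl fun d hd => ?_
  have hdn := Nat.dvd_of_mem_divisors hd
  have hzd : IsPrimitiveRoot (z ^ (n / d)) d := hz.pow hn (Nat.div_mul_cancel hdn).symm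
  simp_rw [sum_Icc_filter_dvd _ (Nat.div_dvd_of_dvd hdn), Nat.div_div_self hdn hn.ne',
    show ∀ t, k * (n / d * t) = n / d * (k * t) by intro t; ring, pow_mul z (n / d)]
  rw [hzd.sum_Icc_pow_mul]
  split_ifs <;> simp [mul_comm]

theorem IsPrimitiveRoot.sum_gcd_eq_div_pow_mul_eq_vonSterneck {K : Type*} [Field K] [CharZero K]
    {z : K} {M m k : ℕ} (hz : IsPrimitiveRoot z M) (hM : 0 < M) (hm : m ∣ M) (hk : k ≠ 0) :
    ∑ v ∈ Icc 1 M with Nat.gcd v M = M / m, z ^ (k * v) = vonSterneck k m := by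
  obtain ⟨d, rfl⟩ := hm
  have hzd : IsPrimitiveRoot (z ^ d) m := hz.pow hM (mul_comm m d)
  rw [Nat.mul_div_cancel_left d (Nat.pos_of_mul_pos_right hM), mul_comm m d,
    sum_Icc_filter_gcd_eq _ (Nat.pos_of_mul_pos_left hM)]
  simp_rw [show ∀ t, k * (d * t) = d * (k * t) by intro t; ring, pow_mul z d]
  exact hzd.sum_coprime_pow_mul_eq_vonSterneck hk

theorem IsPrimitiveRoot.card_filter_dvd_sum_mul {R ι : Type*} [CommRing R] [IsDomain R]
    [Fintype ι] [DecidableEq ι] {z : R} {M : ℕ} (hz : IsPrimitiveRoot z M) (A : ι → Finset ℕ) :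
    (#{x ∈ Fintype.piFinset A | M ∣ ∑ i, x i} : R) * M =
      ∑ k ∈ Icc 1 M, ∏ i, ∑ v ∈ A i, z ^ (k * v) := by
  simp_rw [prod_univ_sum, prod_pow_eq_pow_sum, ← mul_sum]
  rw [sum_comm]
  simp_rw [mul_comm _ (∑ i, _), hz.sum_Icc_pow_mul, ← sum_filter, sum_const, nsmul_eq_mul]

theorem Fintype.filter_piFinset_forall_and {ι α : Type*} [Fintype ι] [DecidableEq ι]
    (s : ι → Finset α) (p : ι → α → Prop) [∀ i, DecidablePred (p i)]
    (q : (ι → α) → Prop) [DecidablePred q]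
    [DecidablePred fun x : ι → α => (∀ i, p i (x i)) ∧ q x] :
    {x ∈ piFinset s | (∀ i, p i (x i)) ∧ q x} =
      {x ∈ piFinset fun i => {a ∈ s i | p i a} | q x} := by
  ext x
  simp only [mem_filter, mem_piFinset, forall_and, and_assoc]

theorem periodic_vonSterneck {n L : ℕ} (h : n ∣ L) : Function.Periodic (vonSterneck · n) L := by
  obtain ⟨c, rfl⟩ := h
  intro k
  simp [vonSterneck]

theorem Function.Periodic.sum_Icc_mul {M : Type*} [AddCommMonoid M] {f : ℕ → M} {L : ℕ}
    (hf : Function.Periodic f L) (q : ℕ) :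
    ∑ k ∈ Icc 1 (L * q), f k = q • ∑ k ∈ Icc 1 L, f k := by
  simp_rw [sum_Icc_one_eq_sum_range]
  induction q with
  | zero => simp
  | succ q ih =>
    rw [mul_add_one, sum_range_add, ih, succ_nsmul]
    congr 1
    refine sum_congr rfl fun i _ => ?_
    rw [show L * q + i + 1 = i + 1 + q * L by ring]
    simpa using hf.nat_mul q (i + 1)

theorem card_congruence_solutions_eq_orbE_general (M : ℕ) (hM : 0 < M) {r : ℕ}
    (m : Fin r → ℕ) (hm : ∀ j, m j ∣ M) :
    (((Fintype.piFinset fun _ : Fin r => Finset.Icc 1 M).filter fun x =>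
        (∀ j, Nat.gcd (x j) M = M / m j) ∧ (∑ j, x j) % M = 0).card : ℚ) = orbE m := by
  obtain ⟨q, hq⟩ : univ.lcm m ∣ M := Finset.lcm_dvd fun j _ => hm j
  have hz := Complex.isPrimitiveRoot_exp M hM.ne'
  have hcount := hz.card_filter_dvd_sum_mul fun j => {v ∈ Icc 1 M | Nat.gcd v M = M / m j}
  rw [sum_congr rfl fun k hk => prod_congr rfl fun j _ =>
    hz.sum_gcd_eq_div_pow_mul_eq_vonSterneck hM (hm j)
      (Nat.one_le_iff_ne_zero.mp (mem_Icc.mp hk).1)] at hcount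
  have hper : Function.Periodic (fun k => ∏ j, vonSterneck k (m j)) (univ.lcm m) := fun k =>
    prod_congr rfl fun j _ => periodic_vonSterneck (dvd_lcm (mem_univ j)) k
  have hsum : ∑ k ∈ Icc 1 M, ∏ j, vonSterneck k (m j) =
      q * ∑ k ∈ Icc 1 (univ.lcm m), ∏ j, vonSterneck k (m j) := by
    rw [hq, hper.sum_Icc_mul, nsmul_eq_mul]
  have hMq : (M : ℚ) = (univ.lcm m : ℕ) * q := by exact_mod_cast hq
  have hq0 : (q : ℚ) ≠ 0 := Nat.cast_ne_zero.mpr (right_ne_zero_of_mul (hq ▸ hM.ne'))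
  have hL0 : ((univ.lcm m : ℕ) : ℚ) ≠ 0 :=
    Nat.cast_ne_zero.mpr (left_ne_zero_of_mul (hq ▸ hM.ne'))
  simp_rw [Nat.dvd_iff_mod_eq_zero] at hcount
  rw [Fintype.filter_piFinset_forall_and _ (fun j v => Nat.gcd v M = M / m j), orbE,
    eq_div_iff hL0]
  apply mul_right_cancel₀ hq0
  rw [mul_assoc, ← hMq, mul_comm _ (q : ℚ), ← hsum]
  exact_mod_cast hcount

theorem card_congruence_solutions_eq_orbE (M : ℕ) (hM : 0 < M) {r : ℕ}
    (m : Fin r → ℕ) (hm : ∀ j, m j ∣ M) (hm0 : ∀ j, 0 < m j) :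
    (((Fintype.piFinset fun _ : Fin r => Finset.Icc 1 M).filter fun x =>
        (∀ j, Nat.gcd (x j) M = M / m j) ∧ (∑ j, x j) % M = 0).card : ℚ) = orbE m :=
  card_congruence_solutions_eq_orbE_general M hM m hm
end
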